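/- The function Ψ(t) = (1/N(t))·(h e^{−βT} N(T) + ℓ ∫_t^T e^{−βs} N(s) ds) is strictly decreasing on [0,T] whenever N is increasing and positive and ℓ, h > 0. Hence for any constant P₀, the equation P₀ = Ψ(t) has at most one solution t₀ ∈ [0,T], and Ψ(T) < P₀ < Ψ(0) implies exactly one such solution. -/
import Mathlib


open MeasureTheory intervalIntegral

/-- Ψ(t) = (1/N(t))(h e^{−βT}N(T) + ℓ∫ₜᵀ e^{−βs}N(s)ds) is
strictly decreasing on [0,T]; hence P₀ = Ψ(t) has at most one solution in
[0,T], and Ψ(T) < P₀ < Ψ(0) implies exactly one. -/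
theorem Psi_strict_anti
    (T β ℓ h : ℝ) (hT : 0 < T) (hβ : 0 < β) (hℓ : 0 < ℓ) (hh : 0 < h)
    (N : ℝ → ℝ) (hNcont : ContinuousOn N (Set.Icc 0 T))
    (hNpos : ∀ t ∈ Set.Icc 0 T, 0 < N t)
    (hNmono : MonotoneOn N (Set.Icc 0 T))
    (Ψ : ℝ → ℝ)
    (hΨ : ∀ t, Ψ t = (1 / N t) *
      (h * Real.exp (-β * T) * N T + ℓ * ∫ s in t..T, Real.exp (-β * s) * N s)) :
    StrictAntiOn Ψ (Set.Icc 0 T) ∧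
    (∀ P₀ : ℝ, {t | t ∈ Set.Icc 0 T ∧ Ψ t = P₀}.Subsingleton) ∧
    (∀ P₀ : ℝ, Ψ T < P₀ → P₀ < Ψ 0 → ∃! t, t ∈ Set.Icc 0 T ∧ Ψ t = P₀) := by
  set f : ℝ → ℝ := fun s => Real.exp (-β * s) * N s with hfdef
  have hfc : ContinuousOn f (Set.Icc 0 T) :=
    (Continuous.continuousOn (by continuity)).mul hNcont
  have hfpos : ∀ s ∈ Set.Icc 0 T, 0 < f s := fun s hs =>
    mul_pos (Real.exp_pos _) (hNpos s hs)
  have hint : ∀ a ∈ Set.Icc 0 T, ∀ b ∈ Set.Icc 0 T, IntervalIntegrable f volume a b := by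
    intro a ha b hb
    exact (hfc.mono (Set.uIcc_subset_Icc ha hb)).intervalIntegrable
  set A : ℝ := h * Real.exp (-β * T) * N T with hAdef
  have hA : 0 < A := mul_pos (mul_pos hh (Real.exp_pos _)) (hNpos T ⟨hT.le, le_rfl⟩)
  set I : ℝ → ℝ := fun t => ∫ s in t..T, f s with hIdef
  have hInonneg : ∀ t ∈ Set.Icc 0 T, 0 ≤ I t := by
    intro t ht
    apply intervalIntegral.integral_nonneg ht.2
    intro s hs
    exact (hfpos s ⟨le_trans ht.1 hs.1, hs.2⟩).le
  have hIanti : ∀ x ∈ Set.Icc 0 T, ∀ y ∈ Set.Icc 0 T, x < y → I y < I x := by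
    intro x hx y hy hxy
    have hsplit : (∫ s in x..y, f s) + I y = I x :=
      intervalIntegral.integral_add_adjacent_intervals
        (hint x hx y hy) (hint y hy T ⟨hT.le, le_rfl⟩)
    have hpos : 0 < ∫ s in x..y, f s := by
      apply intervalIntegral.intervalIntegral_pos_of_pos_on (hint x hx y hy)
      · intro s hs
        exact hfpos s ⟨le_trans hx.1 hs.1.le, le_trans hs.2.le hy.2⟩
      · exact hxy
    linarith
  have hΨ' : ∀ t, Ψ t = (A + ℓ * I t) / N t := by
    intro t
    rw [hΨ t, one_div, inv_mul_eq_div]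
  have hanti : StrictAntiOn Ψ (Set.Icc 0 T) := by
    intro x hx y hy hxy
    rw [hΨ' x, hΨ' y]
    have hNx := hNpos x hx
    have hNy := hNpos y hy
    have hNxy : N x ≤ N y := hNmono hx hy hxy.le
    have h1 : (A + ℓ * I y) / N y ≤ (A + ℓ * I y) / N x := by
      apply div_le_div_of_nonneg_left _ hNx hNxy
      have := hInonneg y hy
      nlinarith
    have h2 : (A + ℓ * I y) / N x < (A + ℓ * I x) / N x := by
      have := hIanti x hx y hy hxy
      apply div_lt_div_of_pos_right _ hNx
      nlinarith
    calc (A + ℓ * I y) / N y ≤ (A + ℓ * I y) / N x := h1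
      _ < (A + ℓ * I x) / N x := h2
  have hsub : ∀ P₀ : ℝ, {t | t ∈ Set.Icc 0 T ∧ Ψ t = P₀}.Subsingleton := by
    intro P₀ a ha b hb
    exact hanti.injOn ha.1 hb.1 (ha.2.trans hb.2.symm)
  refine ⟨hanti, hsub, ?_⟩
  intro P₀ h1 h2
  -- continuity of Ψ on [0,T]
  have hintOn : IntegrableOn f (Set.Icc 0 T) := hfc.integrableOn_Icc
  have hFcont : ContinuousOn (fun x => ∫ s in (0:ℝ)..x, f s) (Set.Icc 0 T) := by
    have := intervalIntegral.continuousOn_primitive_interval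
      (a := 0) (b := T) (f := f) (by rwa [Set.uIcc_of_le hT.le])
    rwa [Set.uIcc_of_le hT.le] at this
  have hIcont : ContinuousOn I (Set.Icc 0 T) := by
    have : ContinuousOn (fun t => (∫ s in (0:ℝ)..T, f s) - ∫ s in (0:ℝ)..t, f s)
        (Set.Icc 0 T) := continuousOn_const.sub hFcont
    apply this.congr
    intro t ht
    have hsplit : (∫ s in (0:ℝ)..t, f s) + I t = ∫ s in (0:ℝ)..T, f s :=
      intervalIntegral.integral_add_adjacent_intervals
        (hint 0 ⟨le_rfl, hT.le⟩ t ht) (hint t ht T ⟨hT.le, le_rfl⟩)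
    simp only [hIdef]
    linarith
  have hΨcont : ContinuousOn Ψ (Set.Icc 0 T) := by
    have : ContinuousOn (fun t => (A + ℓ * I t) / N t) (Set.Icc 0 T) :=
      (continuousOn_const.add (continuousOn_const.mul hIcont)).div hNcont
        (fun t ht => (hNpos t ht).ne')
    exact this.congr (fun t _ => hΨ' t)
  have hsubset := intermediate_value_Icc' hT.le hΨcont
  obtain ⟨t, ht, hΨt⟩ := hsubset ⟨h1.le, h2.le⟩
  refine ⟨t, ⟨ht, hΨt⟩, fun u hu => hsub P₀ hu ⟨ht, hΨt⟩⟩
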